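/- arXiv:1008.4278 — 5 statements merged into one kernel-verified Lean document; each statement's English description precedes it below -/
import Mathlib

section
/- For any Θ in Λ²⊗S² (i.e., Θ(x,y,z,w) antisymmetric in (x,y) and symmetric in (z,w)), the tensor A defined by A(x,y,z,w) := Θ(x,y,z,w) + ½[Θ(z,y,x,w) + Θ(x,z,y,w) − Θ(w,y,x,z) − Θ(x,w,y,z)] is a generalized curvature tensor: it is antisymmetric in (x,y) and satisfies the first Bianchi identity. -/
/-!
Writing `C` for the cyclic sum over the first three slots, antisymmetry of `Θ` in its first
pair alone gives `C(Θ(z,y,x,w)) = C(Θ(x,z,y,w)) = -C(Θ)`, so the first two correction terms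
cancel the cyclic sum of `Θ` itself. In the cyclic sum of the last two correction terms,
antisymmetry turns `Θ(x,w,y,z)` into `-Θ(w,x,y,z)`, and symmetry in the last pair matches these
terms with those of `Θ(w,y,x,z)`.
-/

section CyclicSum

variable {V M : Type*} [AddCommGroup M]

def cyclicSum (T : V → V → V → V → M) (x y z w : V) : M :=
  T x y z w + T y z x w + T z x y w

variable {T : V → V → V → V → M}

theorem cyclicSum_swap_one_three (h12 : ∀ x y z w, T x y z w = -T y x z w) (x y z w : V) :
    cyclicSum (fun x y z w => T z y x w) x y z w = -cyclicSum T x y z w := by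
  simp only [cyclicSum]
  rw [h12 z y, h12 x z, h12 y x]
  abel

theorem cyclicSum_swap_two_three (h12 : ∀ x y z w, T x y z w = -T y x z w) (x y z w : V) :
    cyclicSum (fun x y z w => T x z y w) x y z w = -cyclicSum T x y z w := by
  simp only [cyclicSum]
  rw [h12 x z, h12 y x, h12 z y]
  abel

theorem cyclicSum_insert_fourth_eq_zero (h12 : ∀ x y z w, T x y z w = -T y x z w)
    (h34 : ∀ x y z w, T x y z w = T x y w z) (x y z w : V) :
    cyclicSum (fun x y z w => T w y x z + T x w y z) x y z w = 0 := by
  simp only [cyclicSum]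
  rw [h12 x w, h12 y w, h12 z w, h34 w y x, h34 w z y, h34 w x z]
  abel

end CyclicSum

section SigmaLambdaS

variable {V K : Type*} [Field K]

def sigmaLambdaS (Θ : V → V → V → V → K) (x y z w : V) : K :=
  Θ x y z w + (1/2) * (Θ z y x w + Θ x z y w - Θ w y x z - Θ x w y z)

variable {Θ : V → V → V → V → K}

theorem sigmaLambdaS_antisymm (h12 : ∀ x y z w, Θ x y z w = -Θ y x z w) (x y z w : V) :
    sigmaLambdaS Θ x y z w = -sigmaLambdaS Θ y x z w := by
  simp only [sigmaLambdaS]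
  rw [h12 x y, h12 z y, h12 x z, h12 w y, h12 x w]
  ring

theorem cyclicSum_sigmaLambdaS (h2 : (2 : K) ≠ 0) (h12 : ∀ x y z w, Θ x y z w = -Θ y x z w)
    (h34 : ∀ x y z w, Θ x y z w = Θ x y w z) (x y z w : V) :
    cyclicSum (sigmaLambdaS Θ) x y z w = 0 := by
  have hsplit : cyclicSum (sigmaLambdaS Θ) x y z w = cyclicSum Θ x y z w + (1/2) *
      (cyclicSum (fun x y z w => Θ z y x w) x y z w + cyclicSum (fun x y z w => Θ x z y w) x y z w
        - cyclicSum (fun x y z w => Θ w y x z + Θ x w y z) x y z w) := by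
    simp only [cyclicSum, sigmaLambdaS]
    ring
  rw [hsplit, cyclicSum_swap_one_three h12, cyclicSum_swap_two_three h12,
    cyclicSum_insert_fourth_eq_zero h12 h34]
  field_simp
  ring

end SigmaLambdaS

theorem sigma_of_LambdaS_is_generalized_curvature_general
    {V : Type*}
    (Θ : V → V → V → V → ℝ)
    (hΘ12 : ∀ x y z w, Θ x y z w = - Θ y x z w)
    (hΘ34 : ∀ x y z w, Θ x y z w = Θ x y w z)
    (A : V → V → V → V → ℝ)
    (hA : ∀ x y z w, A x y z w = Θ x y z w +
      (1/2) * (Θ z y x w + Θ x z y w - Θ w y x z - Θ x w y z)) :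
    (∀ x y z w, A x y z w = - A y x z w) ∧
    (∀ x y z w, A x y z w + A y z x w + A z x y w = 0) := by
  obtain rfl : A = sigmaLambdaS Θ := by
    funext x y z w
    exact hA x y z w
  exact ⟨sigmaLambdaS_antisymm hΘ12, cyclicSum_sigmaLambdaS two_ne_zero hΘ12 hΘ34⟩

/-- For `Θ ∈ Λ² ⊗ S²` the tensor
`A(x,y,z,w) = Θ(x,y,z,w) + ½[Θ(z,y,x,w) + Θ(x,z,y,w) − Θ(w,y,x,z) − Θ(x,w,y,z)]`
is a generalized curvature tensor. -/
theorem sigma_of_LambdaS_is_generalized_curvature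
    {V : Type*} [AddCommGroup V] [Module ℝ V]
    (Θ : V → V → V → V → ℝ)
    (hΘ12 : ∀ x y z w, Θ x y z w = - Θ y x z w)
    (hΘ34 : ∀ x y z w, Θ x y z w = Θ x y w z)
    (A : V → V → V → V → ℝ)
    (hA : ∀ x y z w, A x y z w = Θ x y z w +
      (1/2) * (Θ z y x w + Θ x z y w - Θ w y x z - Θ x w y z)) :
    (∀ x y z w, A x y z w = - A y x z w) ∧
    (∀ x y z w, A x y z w + A y z x w + A z x y w = 0) :=
  sigma_of_LambdaS_is_generalized_curvature_general Θ hΘ12 hΘ34 A hA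
end

section
/- Let A be a Weyl tensor on (V,h) with n = dim V ≥ 3. Then the antisymmetric parts of the two Ricci tensors satisfy Λ Ric*(A) = ((n−4)/n) · Λ Ric(A). In particular, if n = 4 then Ric*(A) is symmetric. -/
/-!
Contracting the first Bianchi identity `A(x,i,j,y) + A(i,j,x,y) + A(j,x,i,y) = 0` with the
symmetric `h^{ij}` kills the middle term, because `A` is antisymmetric in its first pair; hence
`Ric*(x,y) = -h^{ij} A(i,x,j,y)`. The Weyl condition swaps the last two slots of `A(i,x,j,y)` at
the cost of a multiple of `h(j,y)`, which contracts to a multiple of `Λ Ric(x,y)`, while the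
swapped term contracts to `Ric(x,y)`. This gives `Ric* = Ric - (4/n) Λ Ric`.
-/

open Finset Matrix

variable {ι R : Type*} [Fintype ι] [CommRing R]

def ricci (g : Matrix ι ι R) (A : ι → ι → ι → ι → R) (x y : ι) : R :=
  ∑ i, ∑ j, g i j * A i x y j

def ricciStar (g : Matrix ι ι R) (A : ι → ι → ι → ι → R) (x y : ι) : R :=
  ∑ i, ∑ j, g i j * A x i j y

theorem Matrix.IsSymm.of_mul_eq_one [DecidableEq ι] {g h : Matrix ι ι R} (hh : h.IsSymm)
    (hgh : g * h = 1) : g.IsSymm :=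
  inv_eq_left_inv hgh ▸ hh.inv

theorem sum_sum_mul_mul_eq_of_mul_eq_one [DecidableEq ι] {g h : Matrix ι ι R} (hgh : g * h = 1)
    (c : ι → R) (y : ι) : ∑ i, ∑ j, g i j * (c i * h j y) = c y := by
  simp_rw [mul_left_comm (g _ _), ← mul_sum, ← mul_apply, hgh, one_apply]
  simp

theorem sum_sum_mul_eq_zero_of_isSymm_of_antisymm [IsAddTorsionFree R] {g : Matrix ι ι R}
    (hg : g.IsSymm) {T : ι → ι → R} (hT : ∀ i j, T i j = -T j i) :
    ∑ i, ∑ j, g i j * T i j = 0 :=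
  self_eq_neg.mp <| by
    conv_lhs => rw [sum_comm]
    rw [← sum_neg_distrib]
    refine sum_congr rfl fun i _ => ?_
    rw [← sum_neg_distrib]
    refine sum_congr rfl fun j _ => ?_
    rw [hg.apply, hT, mul_neg]

theorem ricciStar_eq_ricci_sub [DecidableEq ι] [IsAddTorsionFree R] {g h : Matrix ι ι R}
    (hh : h.IsSymm) (hgh : g * h = 1) {A : ι → ι → ι → ι → R}
    (hA : ∀ i j k l, A i j k l = -A j i k l)
    (hBianchi : ∀ i j k l, A i j k l + A j k i l + A k i j l = 0)
    {B : ι → ι → R} (hAB : ∀ x y z w, A x y z w + A x y w z = B x y * h z w) (x y : ι) :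
    ricciStar g A x y = ricci g A x y - B y x := by
  have hg := hh.of_mul_eq_one hgh
  have hfirst : ∑ i, ∑ j, g i j * A i j x y = 0 :=
    sum_sum_mul_eq_zero_of_isSymm_of_antisymm hg fun i j => hA i j x y
  have hthird : ∑ i, ∑ j, g i j * A j x i y = ∑ i, ∑ j, g i j * A i x j y := by
    rw [sum_comm]
    simp_rw [hg.apply]
  have hswap : ∑ i, ∑ j, g i j * A i x j y = B y x - ricci g A x y := by
    calc ∑ i, ∑ j, g i j * A i x j y
        = ∑ i, ∑ j, (g i j * (B i x * h j y) - g i j * A i x y j) := by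
          refine sum_congr rfl fun i _ => sum_congr rfl fun j _ => ?_
          rw [← hAB]
          ring
      _ = B y x - ricci g A x y := by
          simp only [sum_sub_distrib, sum_sum_mul_mul_eq_of_mul_eq_one hgh, ricci]
  calc ricciStar g A x y
      = ∑ i, ∑ j, (-(g i j * A i j x y) - g i j * A j x i y) := by
        refine sum_congr rfl fun i _ => sum_congr rfl fun j _ => ?_
        linear_combination g i j * hBianchi x i j y
    _ = ricci g A x y - B y x := by
        simp only [sum_sub_distrib, sum_neg_distrib, hfirst, hthird, hswap]
        ring

theorem weyl_alt_ricci_star_eq_general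
    {n : ℕ}
    (h hinv : Matrix (Fin n) (Fin n) ℝ)
    (hsymm : ∀ i j, h i j = h j i)
    (hinv2 : hinv * h = 1)
    (A : Fin n → Fin n → Fin n → Fin n → ℝ)
    (hA12 : ∀ i j k l, A i j k l = - A j i k l)
    (hBianchi : ∀ i j k l, A i j k l + A j k i l + A k i j l = 0)
    (Ric RicStar : Fin n → Fin n → ℝ)
    (hRic : ∀ x y, Ric x y = ∑ i, ∑ j, hinv i j * A i x y j)
    (hRicStar : ∀ x y, RicStar x y = ∑ i, ∑ j, hinv i j * A x i j y)
    (hWeyl : ∀ x y z w, A x y z w + A x y w z =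
      (2 / (n : ℝ)) * (Ric y x - Ric x y) * h z w) :
    (∀ x y, (1/2) * (RicStar x y - RicStar y x)
        = (((n : ℝ) - 4) / (n : ℝ)) * ((1/2) * (Ric x y - Ric y x))) ∧
    (n = 4 → ∀ x y, RicStar x y = RicStar y x) := by
  obtain rfl : Ric = ricci hinv A := funext₂ hRic
  obtain rfl : RicStar = ricciStar hinv A := funext₂ hRicStar
  have hStar := ricciStar_eq_ricci_sub (IsSymm.ext fun i j => hsymm j i) hinv2 hA12 hBianchi
    (B := fun x y => 2 / (n : ℝ) * (ricci hinv A y x - ricci hinv A x y)) hWeyl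
  have hskew : ∀ x y, (1/2) * (ricciStar hinv A x y - ricciStar hinv A y x)
      = (((n : ℝ) - 4) / (n : ℝ)) * ((1/2) * (ricci hinv A x y - ricci hinv A y x)) := by
    intro x y
    have hn : (n : ℝ) ≠ 0 := by exact_mod_cast x.pos.ne'
    rw [hStar x y, hStar y x]
    field_simp
    ring
  refine ⟨hskew, fun h4 x y => ?_⟩
  subst h4
  linarith [hskew x y]

/-- For a Weyl tensor `A` on `(V,h)`, `n ≥ 3`, the antisymmetric
parts of the two Ricci tensors satisfy `Λ Ric* = ((n−4)/n)·Λ Ric`; in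
particular `Ric*` is symmetric when `n = 4`. -/
theorem weyl_alt_ricci_star_eq
    {n : ℕ} (hn : 3 ≤ n)
    (h hinv : Matrix (Fin n) (Fin n) ℝ)
    (hsymm : ∀ i j, h i j = h j i)
    (hinv1 : h * hinv = 1) (hinv2 : hinv * h = 1)
    (A : Fin n → Fin n → Fin n → Fin n → ℝ)
    (hA12 : ∀ i j k l, A i j k l = - A j i k l)
    (hBianchi : ∀ i j k l, A i j k l + A j k i l + A k i j l = 0)
    (Ric RicStar : Fin n → Fin n → ℝ)
    (hRic : ∀ x y, Ric x y = ∑ i, ∑ j, hinv i j * A i x y j)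
    (hRicStar : ∀ x y, RicStar x y = ∑ i, ∑ j, hinv i j * A x i j y)
    (hWeyl : ∀ x y z w, A x y z w + A x y w z =
      (2 / (n : ℝ)) * (Ric y x - Ric x y) * h z w) :
    (∀ x y, (1/2) * (RicStar x y - RicStar y x)
        = (((n : ℝ) - 4) / (n : ℝ)) * ((1/2) * (Ric x y - Ric y x))) ∧
    (n = 4 → ∀ x y, RicStar x y = RicStar y x) :=
  weyl_alt_ricci_star_eq_general h hinv hsymm hinv2 A hA12 hBianchi Ric RicStar hRic hRicStar hWeyl
end

section
/- Let A be a Weyl tensor on (V,h), n ≥ 3. The following are equivalent: (1) A is an algebraic curvature tensor (antisymmetric in the last two slots); (2) the conjugate tensor A*(x,y,z,w) := −A(x,y,w,z) satisfies the first Bianchi identity; (3) Λ Ric(A) = 0. -/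
/-!
By the Weyl condition, `A(x, y, z, w) + A(x, y, w, z) = (2/n) (Ric y x - Ric x y) h(z, w)`;
as `h ≠ 0`, this vanishes exactly when `Ric` is symmetric, so (1) ⇔ (3). Under (1) the
conjugate tensor is `A` itself, giving (2). Conversely, adding the Bianchi identities of `A`
and `A*` and using the Weyl condition, the cyclic sum of `s(x, y) h(w, z)` vanishes, where `s(x, y) = Ric y x - Ric x y`;
contracting it with `h⁻¹` in `z, w` leaves `(n - 2) s(x, y) = 0`.
-/

open Finset

namespace FourTensor

variable {ι R : Type*} [CommRing R]

def SatisfiesBianchi (T : ι → ι → ι → ι → R) : Prop :=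
  ∀ x y z w, T x y z w + T y z x w + T z x y w = 0

def IsSkewInLastTwo (T : ι → ι → ι → ι → R) : Prop :=
  ∀ x y z w, T x y z w = - T x y w z

def conjugate (T : ι → ι → ι → ι → R) : ι → ι → ι → ι → R :=
  fun x y z w => - T x y w z

/-- The Weyl condition, with the normalising factor `2 / n` replaced by an arbitrary `c`. -/
def WeylIdentity (c : R) (h : Matrix ι ι R) (Ric : ι → ι → R) (T : ι → ι → ι → ι → R) : Prop :=
  ∀ x y z w, T x y z w + T x y w z = c * (Ric y x - Ric x y) * h z w

variable {c : R} {h hinv : Matrix ι ι R} {Ric : ι → ι → R} {T : ι → ι → ι → ι → R}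

theorem conjugate_eq_self (hT : IsSkewInLastTwo T) : conjugate T = T := by
  funext x y z w
  simp [conjugate, hT x y w z]

theorem WeylIdentity.isSkewInLastTwo (hW : WeylIdentity c h Ric T)
    (hRic : ∀ x y, Ric x y = Ric y x) : IsSkewInLastTwo T := by
  intro x y z w
  have := hW x y z w
  rw [hRic y x, sub_self, mul_zero, zero_mul] at this
  exact eq_neg_of_add_eq_zero_left this

theorem WeylIdentity.ricci_symm [NoZeroDivisors R] (hW : WeylIdentity c h Ric T) (hc : c ≠ 0)
    (hh : h ≠ 0) (hT : IsSkewInLastTwo T) (x y : ι) : Ric x y = Ric y x := by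
  obtain ⟨z, w, hzw⟩ : ∃ z w, h z w ≠ 0 := by
    by_contra! H
    exact hh (Matrix.ext H)
  have hzero : c * (Ric x y - Ric y x) * h z w = 0 := by
    rw [← hW y x z w, hT y x z w, neg_add_cancel]
  simpa [hc, hzw, sub_eq_zero] using hzero

theorem WeylIdentity.cyclic_sum_eq_zero [NoZeroDivisors R] (hW : WeylIdentity c h Ric T)
    (hc : c ≠ 0) (hB : SatisfiesBianchi T) (hB' : SatisfiesBianchi (conjugate T)) (x y z w : ι) :
    (Ric y x - Ric x y) * h w z + (Ric z y - Ric y z) * h w x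
      + (Ric x z - Ric z x) * h w y = 0 := by
  have hsum : c * ((Ric y x - Ric x y) * h w z + (Ric z y - Ric y z) * h w x
      + (Ric x z - Ric z x) * h w y) = 0 := by
    have := hB' x y z w
    simp only [conjugate] at this
    linear_combination hB x y z w - this - hW x y w z - hW y z w x - hW z x w y
  exact (mul_eq_zero.mp hsum).resolve_left hc

theorem sub_two_mul_eq_zero_of_cyclic_sum_eq_zero [Fintype ι] [DecidableEq ι] (hinvh : hinv * h = 1) {s : ι → ι → R}
    (hs : ∀ x y, s y x = - s x y)
    (hcyc : ∀ x y z w, s x y * h w z + s y z * h w x + s z x * h w y = 0) (x y : ι) :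
    ((Fintype.card ι : R) - 2) * s x y = 0 := by
  have hdelta : ∀ z u, ∑ w, hinv z w * h w u = if z = u then 1 else 0 := fun z u => by
    rw [← Matrix.mul_apply, hinvh, Matrix.one_apply]
  have hcontr : ∑ z, ∑ w, hinv z w * (s x y * h w z + s y z * h w x + s z x * h w y) = 0 := by
    simp [hcyc]
  simp only [mul_add, sum_add_distrib, mul_left_comm (hinv _ _), ← mul_sum, hdelta, mul_ite,
    mul_one, mul_zero, ↓reduceIte, sum_const, card_univ, nsmul_eq_mul, sum_ite_eq', mem_univ,
    hs x y] at hcontr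
  linear_combination hcontr

theorem WeylIdentity.ricci_symm_of_bianchi_conjugate [Fintype ι] [DecidableEq ι] [NoZeroDivisors R]
    (hW : WeylIdentity c h Ric T) (hc : c ≠ 0) (hinvh : hinv * h = 1)
    (hcard : (Fintype.card ι : R) - 2 ≠ 0) (hB : SatisfiesBianchi T)
    (hB' : SatisfiesBianchi (conjugate T)) (x y : ι) : Ric x y = Ric y x := by
  have := sub_two_mul_eq_zero_of_cyclic_sum_eq_zero hinvh (s := fun x y => Ric y x - Ric x y)
    (fun _ _ => by ring) (hW.cyclic_sum_eq_zero hc hB hB') x y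
  simpa [hcard, sub_eq_zero, eq_comm] using this

end FourTensor

open FourTensor in
theorem weyl_algebraic_iff_conjugate_bianchi_iff_ricci_symm_general
    {n : ℕ} (hn : 3 ≤ n)
    (h hinv : Matrix (Fin n) (Fin n) ℝ)
    (hinv2 : hinv * h = 1)
    (A : Fin n → Fin n → Fin n → Fin n → ℝ)
    (hBianchi : ∀ i j k l, A i j k l + A j k i l + A k i j l = 0)
    (Ric : Fin n → Fin n → ℝ)
    (hWeyl : ∀ x y z w, A x y z w + A x y w z =
      (2 / (n : ℝ)) * (Ric y x - Ric x y) * h z w)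
    (Astar : Fin n → Fin n → Fin n → Fin n → ℝ)
    (hAstar : ∀ x y z w, Astar x y z w = - A x y w z) :
    ((∀ x y z w, A x y z w = - A x y w z) ↔
      (∀ x y z w, Astar x y z w + Astar y z x w + Astar z x y w = 0)) ∧
    ((∀ x y z w, A x y z w = - A x y w z) ↔
      (∀ x y, Ric x y = Ric y x)) := by
  have : NeZero n := ⟨by omega⟩
  have hW : WeylIdentity (2 / (n : ℝ)) h Ric A := hWeyl
  have hc : 2 / (n : ℝ) ≠ 0 := by positivity
  have hcard : (Fintype.card (Fin n) : ℝ) - 2 ≠ 0 := by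
    rw [Fintype.card_fin]
    have : (3 : ℝ) ≤ n := by exact_mod_cast hn
    linarith
  obtain rfl : Astar = conjugate A := funext₂ fun x y => funext₂ (hAstar x y)
  have skew_iff_symm : IsSkewInLastTwo A ↔ ∀ x y, Ric x y = Ric y x :=
    ⟨hW.ricci_symm hc (right_ne_zero_of_mul_eq_one hinv2), hW.isSkewInLastTwo⟩
  have bianchi_iff_symm : SatisfiesBianchi (conjugate A) ↔ ∀ x y, Ric x y = Ric y x :=
    ⟨hW.ricci_symm_of_bianchi_conjugate hc hinv2 hcard hBianchi,
      fun hRic => (conjugate_eq_self (hW.isSkewInLastTwo hRic)).symm ▸ hBianchi⟩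
  exact ⟨skew_iff_symm.trans bianchi_iff_symm.symm, skew_iff_symm⟩

/-- For a Weyl tensor `A` on `(V,h)`, `n ≥ 3`, the following are
equivalent: (1) `A` is an algebraic curvature tensor; (2) the conjugate tensor
`A*(x,y,z,w) = −A(x,y,w,z)` satisfies the first Bianchi identity;
(3) `Λ Ric(A) = 0`. -/
theorem weyl_algebraic_iff_conjugate_bianchi_iff_ricci_symm
    {n : ℕ} (hn : 3 ≤ n)
    (h hinv : Matrix (Fin n) (Fin n) ℝ)
    (hsymm : ∀ i j, h i j = h j i)
    (hinv1 : h * hinv = 1) (hinv2 : hinv * h = 1)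
    (A : Fin n → Fin n → Fin n → Fin n → ℝ)
    (hA12 : ∀ i j k l, A i j k l = - A j i k l)
    (hBianchi : ∀ i j k l, A i j k l + A j k i l + A k i j l = 0)
    (Ric : Fin n → Fin n → ℝ)
    (hRic : ∀ x y, Ric x y = ∑ i, ∑ j, hinv i j * A i x y j)
    (hWeyl : ∀ x y z w, A x y z w + A x y w z =
      (2 / (n : ℝ)) * (Ric y x - Ric x y) * h z w)
    (Astar : Fin n → Fin n → Fin n → Fin n → ℝ)
    (hAstar : ∀ x y z w, Astar x y z w = - A x y w z) :
    ((∀ x y z w, A x y z w = - A x y w z) ↔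
      (∀ x y z w, Astar x y z w + Astar y z x w + Astar z x y w = 0)) ∧
    ((∀ x y z w, A x y z w = - A x y w z) ↔
      (∀ x y, Ric x y = Ric y x)) :=
  weyl_algebraic_iff_conjugate_bianchi_iff_ricci_symm_general hn h hinv hinv2 A hBianchi Ric hWeyl
    Astar hAstar
end

section
/- Let A be a Weyl tensor with totally trace-free projective part: define p(A) := A + (1/(n+1))[2ΛRic·h + ΛRic∧h] + (1/(n−1))(S Ric)∧h. If p(A) = 0 then A = −(1/(n(n−1)))·τ_h·(h∧h), where τ_h = Σ h^{ij}Ric(e_i,e_j); i.e., A is of constant curvature type. -/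
/-!
Symmetrizing `p(A) = 0` in its last two slots and using the Weyl condition
`A(x,y,z,w) + A(x,y,w,z) = -(4/n) ΛRic(x,y) h(z,w)` eliminates `A`. Contracting the result
with `h⁻¹` in the second and fourth slots leaves
`(n² - 4)/(n(n+1)) · ΛRic + (n · S Ric - τ h)/(n - 1) = 0`, whose antisymmetric and symmetric
parts give `ΛRic = 0` (as `n ≥ 3`) and `S Ric = (τ/n) h`. Substituting these back into
`p(A) = 0` expresses `A` as a multiple of `h ∧ h`.
-/

open Finset Matrix

namespace ProjectiveCurvature

variable {n : ℕ}

def contract (g : Matrix (Fin n) (Fin n) ℝ) (T : Fin n → Fin n → ℝ) : ℝ :=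
  ∑ i, ∑ j, g i j * T i j

def wedge (θ₁ θ₂ : Fin n → Fin n → ℝ) (x y z w : Fin n) : ℝ :=
  θ₁ x z * θ₂ y w - θ₁ y z * θ₂ x w

section Linearity

variable (g : Matrix (Fin n) (Fin n) ℝ) (S T : Fin n → Fin n → ℝ)

theorem contract_add : contract g (fun i j => S i j + T i j) = contract g S + contract g T := by
  simp only [contract, mul_add, sum_add_distrib]

theorem contract_sub : contract g (fun i j => S i j - T i j) = contract g S - contract g T := by
  simp only [contract, mul_sub, sum_sub_distrib]

theorem contract_const_mul (c : ℝ) : contract g (fun i j => c * T i j) = c * contract g T := by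
  simp only [contract, mul_sum]
  exact sum_congr rfl fun _ _ => sum_congr rfl fun _ _ => by ring

end Linearity

theorem contract_eq_zero_of_antisymm {g : Matrix (Fin n) (Fin n) ℝ} (hg : g.IsSymm)
    {T : Fin n → Fin n → ℝ} (hT : ∀ i j, T j i = -T i j) : contract g T = 0 := by
  have hterm : ∀ i j, g i j * T i j = -(g j i * T j i) := fun i j => by
    rw [hg.apply, hT]; ring
  have hswap : contract g T = -contract g T := by
    calc contract g T = ∑ j, ∑ i, g i j * T i j := by unfold contract; exact sum_comm
      _ = -contract g T := by
        simp only [contract, ← sum_neg_distrib]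
        exact sum_congr rfl fun j _ => sum_congr rfl fun i _ => hterm i j
  linarith

section Inverse

variable {g h : Matrix (Fin n) (Fin n) ℝ}

theorem isSymm_of_mul_eq_one (hgh : g * h = 1) (hh : h.IsSymm) : g.IsSymm :=
  inv_eq_left_inv hgh ▸ hh.inv

theorem contract_self (hgh : g * h = 1) (hh : h.IsSymm) : contract g h = n := by
  have hdiag : ∀ i, ∑ j, g i j * h i j = 1 := fun i => by
    simpa only [mul_apply, hh.apply, one_apply_eq] using congrFun (congrFun hgh i) i
  simp [contract, hdiag]

theorem contract_mul_left (hgh : g * h = 1) (hh : h.IsSymm) (f : Fin n → ℝ) (u : Fin n) :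
    contract g (fun y w => f y * h u w) = f u := by
  have hrow : ∀ y, ∑ w, g y w * (f y * h u w) = f y * (1 : Matrix (Fin n) (Fin n) ℝ) y u :=
    fun y => by
      rw [← hgh, mul_apply, mul_sum]
      exact sum_congr rfl fun w _ => by rw [hh.apply]; ring
  simp [contract, hrow, one_apply]

theorem contract_mul_right (hgh : g * h = 1) (hh : h.IsSymm) (f : Fin n → ℝ) (u : Fin n) :
    contract g (fun y w => f w * h y u) = f u := by
  have hsymm := isSymm_of_mul_eq_one hgh hh
  calc contract g (fun y w => f w * h y u) = contract g (fun w y => f w * h u y) := by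
        simp only [contract]; rw [sum_comm]
        exact sum_congr rfl fun _ _ => sum_congr rfl fun _ _ => by rw [hsymm.apply, hh.apply]
    _ = f u := contract_mul_left hgh hh f u

theorem contract_wedge_add_wedge_swap (hgh : g * h = 1) (hh : h.IsSymm)
    (θ : Fin n → Fin n → ℝ) (x z : Fin n) :
    contract g (fun y w => wedge θ h x y z w + wedge θ h x y w z)
      = n * θ x z - contract g θ * h x z := by
  have hsplit : (fun y w => wedge θ h x y z w + wedge θ h x y w z) = fun y w =>
      (θ x z * h y w - θ y z * h x w) + (θ x w * h y z - h x z * θ y w) := by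
    funext y w; simp only [wedge]; ring
  rw [hsplit, contract_add, contract_sub, contract_sub, contract_const_mul g h, contract_const_mul,
    contract_self hgh hh, contract_mul_left hgh hh (θ · z), contract_mul_right hgh hh (θ x ·)]
  ring

theorem contract_symmetrized_projective (hgh : g * h = 1) (hh : h.IsSymm)
    (L S : Fin n → Fin n → ℝ) (a b c : ℝ) (x z : Fin n)
    (H : ∀ y w, c * (L x y * h z w) + a * (wedge L h x y z w + wedge L h x y w z)
      + b * (wedge S h x y z w + wedge S h x y w z) = 0) :
    c * L x z + a * (n * L x z - contract g L * h x z)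
      + b * (n * S x z - contract g S * h x z) = 0 := by
  have hzero : contract g (fun y w => c * (L x y * h z w)
      + a * (wedge L h x y z w + wedge L h x y w z)
      + b * (wedge S h x y z w + wedge S h x y w z)) = 0 := by
    simp only [H]; simp [contract]
  rwa [contract_add, contract_add, contract_const_mul, contract_const_mul, contract_const_mul,
    contract_mul_left hgh hh (L x ·), contract_wedge_add_wedge_swap hgh hh,
    contract_wedge_add_wedge_swap hgh hh] at hzero

end Inverse

theorem antisymm_and_symm_eq_zero_of_add_eq_zero {α : Type*} {L M : α → α → ℝ}
    (hL : ∀ x z, L z x = -L x z) (hM : ∀ x z, M z x = M x z)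
    (h0 : ∀ x z, L x z + M x z = 0) (x z : α) : L x z = 0 ∧ M x z = 0 := by
  have hswap := h0 z x
  rw [hL, hM] at hswap
  constructor <;> linarith [h0 x z]

theorem symmetrized_projective_eq_zero {h : Fin n → Fin n → ℝ} (hsymm : ∀ i j, h i j = h j i)
    {A : Fin n → Fin n → Fin n → Fin n → ℝ} {Ric LRic SRic : Fin n → Fin n → ℝ}
    (hWeyl : ∀ x y z w, A x y z w + A x y w z = (2 / (n : ℝ)) * (Ric y x - Ric x y) * h z w)
    (hLRic : ∀ x y, LRic x y = (1/2) * (Ric x y - Ric y x))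
    (hp : ∀ x y z w, A x y z w
        + (1 / ((n : ℝ) + 1)) * (2 * LRic x y * h z w + (LRic x z * h y w - LRic y z * h x w))
        + (1 / ((n : ℝ) - 1)) * (SRic x z * h y w - SRic y z * h x w) = 0)
    (x y z w : Fin n) :
    (4 / (n + 1) - 4 / n) * (LRic x y * h z w)
      + 1 / (n + 1) * (wedge LRic h x y z w + wedge LRic h x y w z)
      + 1 / (n - 1) * (wedge SRic h x y z w + wedge SRic h x y w z) = 0 := by
  simp only [wedge]
  linear_combination hp x y z w + hp x y w z - hWeyl x y z w
    - (2 / (n + 1) * LRic x y) * hsymm w z - (4 / n * h z w) * hLRic x y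

theorem antisymm_eq_zero_and_symm_proportional {α : Type*} (hn : 3 ≤ n)
    {L S h : α → α → ℝ} {τ : ℝ} (hL : ∀ x z, L z x = -L x z) (hS : ∀ x z, S z x = S x z)
    (hh : ∀ x z, h z x = h x z)
    (H : ∀ x z, (4 / (n + 1) - 4 / n) * L x z + 1 / (n + 1) * (n * L x z)
      + 1 / (n - 1) * (n * S x z - τ * h x z) = 0) :
    (∀ x z, L x z = 0) ∧ ∀ x z, S x z = τ / n * h x z := by
  have hn' : (3 : ℝ) ≤ n := by exact_mod_cast hn
  have hparts := antisymm_and_symm_eq_zero_of_add_eq_zero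
    (L := fun x z => (4 / (n + 1) - 4 / n + n / (n + 1)) * L x z)
    (M := fun x z => 1 / (n - 1) * (n * S x z - τ * h x z))
    (fun x z => by rw [hL]; ring) (fun x z => by rw [hS, hh])
    (fun x z => by linear_combination H x z)
  have hcoef : (4 / (n + 1) - 4 / n + n / (n + 1) : ℝ) ≠ 0 := by
    rw [show (4 / (n + 1) - 4 / n + n / (n + 1) : ℝ) = (n ^ 2 - 4) / (n * (n + 1)) by
      field_simp; ring]
    exact (div_pos (by nlinarith) (by positivity)).ne'
  refine ⟨fun x z => (mul_eq_zero.mp (hparts x z).1).resolve_left hcoef, fun x z => ?_⟩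
  have hb : (1 / (n - 1) : ℝ) ≠ 0 := one_div_ne_zero (by linarith)
  have hS_eq := (mul_eq_zero.mp (hparts x z).2).resolve_left hb
  field_simp
  linarith

end ProjectiveCurvature

open ProjectiveCurvature Matrix in
theorem projectively_flat_weyl_is_constant_curvature_general
    {n : ℕ} (hn : 3 ≤ n)
    (h hinv : Matrix (Fin n) (Fin n) ℝ)
    (hsymm : ∀ i j, h i j = h j i)
    (hinv2 : hinv * h = 1)
    (A : Fin n → Fin n → Fin n → Fin n → ℝ)
    (Ric : Fin n → Fin n → ℝ)
    (hWeyl : ∀ x y z w, A x y z w + A x y w z =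
      (2 / (n : ℝ)) * (Ric y x - Ric x y) * h z w)
    (LRic SRic : Fin n → Fin n → ℝ)
    (hLRic : ∀ x y, LRic x y = (1/2) * (Ric x y - Ric y x))
    (hSRic : ∀ x y, SRic x y = (1/2) * (Ric x y + Ric y x))
    (τ : ℝ) (hτ : τ = ∑ i, ∑ j, hinv i j * Ric i j)
    (hp : ∀ x y z w,
      A x y z w
        + (1 / ((n : ℝ) + 1)) * (2 * LRic x y * h z w
            + (LRic x z * h y w - LRic y z * h x w))
        + (1 / ((n : ℝ) - 1)) * (SRic x z * h y w - SRic y z * h x w) = 0) :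
    ∀ x y z w, A x y z w =
      - (1 / ((n : ℝ) * ((n : ℝ) - 1))) * τ * (h x z * h y w - h y z * h x w) := by
  have hh : h.IsSymm := IsSymm.ext fun i j => hsymm j i
  have hL_anti : ∀ x z, LRic z x = -LRic x z := fun x z => by rw [hLRic, hLRic]; ring
  have hS_symm : ∀ x z, SRic z x = SRic x z := fun x z => by rw [hSRic, hSRic]; ring
  have htrL : contract hinv LRic = 0 :=
    contract_eq_zero_of_antisymm (isSymm_of_mul_eq_one hinv2 hh) hL_anti
  have htrS : contract hinv SRic = τ := by
    have hsplit : SRic = fun i j => Ric i j - LRic i j := by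
      funext i j; rw [hSRic, hLRic]; ring
    rw [hsplit, contract_sub, htrL, hτ, sub_zero, contract]
  have hcontr := fun x z => contract_symmetrized_projective hinv2 hh _ _ _ _ _ x z
    (symmetrized_projective_eq_zero hsymm hWeyl hLRic hp x · z ·)
  simp only [htrL, htrS, zero_mul, sub_zero] at hcontr
  obtain ⟨hL, hS⟩ := antisymm_eq_zero_and_symm_proportional hn hL_anti hS_symm
    (fun x z => hsymm z x) hcontr
  intro x y z w
  rw [← one_div_mul_one_div]
  linear_combination hp x y z w - (2 / (n + 1) * h z w) * hL x y - (1 / (n + 1) * h y w) * hL x z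
    + (1 / (n + 1) * h x w) * hL y z - (1 / (n - 1) * h y w) * hS x z
    + (1 / (n - 1) * h x w) * hS y z

/-- For a Weyl tensor `A` with vanishing projective curvature
tensor `p(A) = A + (1/(n+1))[2ΛRic·h + ΛRic∧h] + (1/(n−1))(S Ric)∧h = 0`,
one has `A = −(1/(n(n−1)))·τ_h·(h∧h)`, i.e. `A` is of constant curvature
type. Here `(θ₁∧θ₂)(x,y,z,w) = θ₁(x,z)θ₂(y,w) − θ₁(y,z)θ₂(x,w)`. -/
theorem projectively_flat_weyl_is_constant_curvature
    {n : ℕ} (hn : 3 ≤ n)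
    (h hinv : Matrix (Fin n) (Fin n) ℝ)
    (hsymm : ∀ i j, h i j = h j i)
    (hinv1 : h * hinv = 1) (hinv2 : hinv * h = 1)
    (A : Fin n → Fin n → Fin n → Fin n → ℝ)
    (hA12 : ∀ i j k l, A i j k l = - A j i k l)
    (hBianchi : ∀ i j k l, A i j k l + A j k i l + A k i j l = 0)
    (Ric : Fin n → Fin n → ℝ)
    (hRic : ∀ x y, Ric x y = ∑ i, ∑ j, hinv i j * A i x y j)
    (hWeyl : ∀ x y z w, A x y z w + A x y w z =
      (2 / (n : ℝ)) * (Ric y x - Ric x y) * h z w)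
    (LRic SRic : Fin n → Fin n → ℝ)
    (hLRic : ∀ x y, LRic x y = (1/2) * (Ric x y - Ric y x))
    (hSRic : ∀ x y, SRic x y = (1/2) * (Ric x y + Ric y x))
    (τ : ℝ) (hτ : τ = ∑ i, ∑ j, hinv i j * Ric i j)
    (hp : ∀ x y z w,
      A x y z w
        + (1 / ((n : ℝ) + 1)) * (2 * LRic x y * h z w
            + (LRic x z * h y w - LRic y z * h x w))
        + (1 / ((n : ℝ) - 1)) * (SRic x z * h y w - SRic y z * h x w) = 0) :
    ∀ x y z w, A x y z w =
      - (1 / ((n : ℝ) * ((n : ℝ) - 1))) * τ * (h x z * h y w - h y z * h x w) :=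
  projectively_flat_weyl_is_constant_curvature_general hn h hinv hsymm hinv2 A Ric hWeyl LRic SRic
    hLRic hSRic τ hτ hp
end

section
/- Let A be a Weyl tensor on (V,h), n ≥ 4, and write A = A_alg + H where H := −(1/n)[2(ΛRic)·h + (ΛRic)∧₁h] is the Higa term and A_alg := A − H. Then A_alg is an algebraic curvature tensor: it is antisymmetric in the first two and last two slots and satisfies the first Bianchi identity. Consequently 𝔚 = 𝔄 ⊕ 𝔓 where 𝔓 = {(σ₄−σ₅)φ : φ ∈ Λ²}. -/
/-!
For an antisymmetric `L` and a symmetric `h`, the tensor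
`H = c [2 L·h + L ∧₁ h]` is antisymmetric in its first pair and satisfies the first Bianchi
identity, while its symmetrisation in the last pair is `4c L(x,y) h(z,w)`. With `c = −1/n` and
`L = ΛRic` this is exactly the right-hand side of the Weyl condition, so `A − H` inherits the
first-pair antisymmetry and the Bianchi identity from `A` and becomes antisymmetric in the last
pair as well.
-/

section HigaTensor

variable {ι R : Type*} [CommRing R]

def IsAlgebraicCurvatureTensor (T : ι → ι → ι → ι → R) : Prop :=
  (∀ x y z w, T x y z w = - T y x z w) ∧
  (∀ x y z w, T x y z w = - T x y w z) ∧
  (∀ x y z w, T x y z w + T y z x w + T z x y w = 0)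

/-- `c (2 L·h + L ∧₁ h)`, in the notation of the paper. -/
def higaTensor (c : R) (L h : ι → ι → R) (x y z w : ι) : R :=
  c * (2 * L x y * h z w +
    (L x z * h y w - L y z * h x w - L x w * h y z + L y w * h x z))

variable {c : R} {L h : ι → ι → R}

theorem higaTensor_swap_left (hL : ∀ x y, L x y = - L y x) (x y z w : ι) :
    higaTensor c L h x y z w = - higaTensor c L h y x z w := by
  unfold higaTensor
  linear_combination (2 * c * h z w) * hL x y

theorem higaTensor_add_swap_right (hh : ∀ i j, h i j = h j i) (x y z w : ι) :
    higaTensor c L h x y z w + higaTensor c L h x y w z = 4 * c * L x y * h z w := by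
  unfold higaTensor
  rw [hh w z]
  ring

theorem higaTensor_cyclic_sum (hL : ∀ x y, L x y = - L y x) (hh : ∀ i j, h i j = h j i)
    (x y z w : ι) :
    higaTensor c L h x y z w + higaTensor c L h y z x w + higaTensor c L h z x y w = 0 := by
  unfold higaTensor
  rw [hh z x, hh y x, hh z y]
  linear_combination (c * h z w) * hL x y + (c * h x w) * hL y z + (c * h y w) * hL z x

theorem isAlgebraicCurvatureTensor_sub_higaTensor {A : ι → ι → ι → ι → R}
    (hA : ∀ x y z w, A x y z w = - A y x z w)
    (hBianchi : ∀ x y z w, A x y z w + A y z x w + A z x y w = 0)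
    (hWeyl : ∀ x y z w, A x y z w + A x y w z = 4 * c * L x y * h z w)
    (hL : ∀ x y, L x y = - L y x) (hh : ∀ i j, h i j = h j i) :
    IsAlgebraicCurvatureTensor fun x y z w => A x y z w - higaTensor c L h x y z w := by
  refine ⟨fun x y z w => ?_, fun x y z w => ?_, fun x y z w => ?_⟩
  · linear_combination hA x y z w - higaTensor_swap_left hL x y z w
  · linear_combination hWeyl x y z w - higaTensor_add_swap_right hh x y z w
  · linear_combination hBianchi x y z w - higaTensor_cyclic_sum hL hh x y z w

end HigaTensor

theorem weyl_minus_higa_is_algebraic_general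
    {n : ℕ}
    (h : Matrix (Fin n) (Fin n) ℝ)
    (hsymm : ∀ i j, h i j = h j i)
    (A : Fin n → Fin n → Fin n → Fin n → ℝ)
    (hA12 : ∀ i j k l, A i j k l = - A j i k l)
    (hBianchi : ∀ i j k l, A i j k l + A j k i l + A k i j l = 0)
    (Ric : Fin n → Fin n → ℝ)
    (hWeyl : ∀ x y z w, A x y z w + A x y w z =
      (2 / (n : ℝ)) * (Ric y x - Ric x y) * h z w)
    (LRic : Fin n → Fin n → ℝ)
    (hLRic : ∀ x y, LRic x y = (1/2) * (Ric x y - Ric y x))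
    (H : Fin n → Fin n → Fin n → Fin n → ℝ)
    (hH : ∀ x y z w, H x y z w = - (1 / (n : ℝ)) *
      (2 * LRic x y * h z w +
        (LRic x z * h y w - LRic y z * h x w
          - LRic x w * h y z + LRic y w * h x z)))
    (Aalg : Fin n → Fin n → Fin n → Fin n → ℝ)
    (hAalg : ∀ x y z w, Aalg x y z w = A x y z w - H x y z w) :
    (∀ x y z w, Aalg x y z w = - Aalg y x z w) ∧
    (∀ x y z w, Aalg x y z w = - Aalg x y w z) ∧
    (∀ x y z w, Aalg x y z w + Aalg y z x w + Aalg z x y w = 0) := by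
  have hLRic_antisymm : ∀ x y, LRic x y = - LRic y x := fun x y => by
    rw [hLRic, hLRic]; ring
  have hAalg_eq :
      Aalg = fun x y z w => A x y z w - higaTensor (-(1 / (n : ℝ))) LRic h x y z w := by
    funext x y z w
    rw [hAalg, hH]; rfl
  rw [hAalg_eq]
  refine isAlgebraicCurvatureTensor_sub_higaTensor hA12 hBianchi (fun x y z w => ?_)
    hLRic_antisymm hsymm
  rw [hWeyl, hLRic]
  ring

/-- For a Weyl tensor `A` (`n ≥ 4`) with Higa term
`H = −(1/n)[2(ΛRic)·h + (ΛRic)∧₁h]`, the difference `A_alg = A − H` is an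
algebraic curvature tensor: antisymmetric in the first two and in the last
two slots, and satisfying the first Bianchi identity. Consequently
`𝔚 = 𝔄 ⊕ 𝔓` with `𝔓 = {(σ₄−σ₅)φ : φ ∈ Λ²}`. -/
theorem weyl_minus_higa_is_algebraic
    {n : ℕ} (hn : 4 ≤ n)
    (h hinv : Matrix (Fin n) (Fin n) ℝ)
    (hsymm : ∀ i j, h i j = h j i)
    (hinv1 : h * hinv = 1) (hinv2 : hinv * h = 1)
    (A : Fin n → Fin n → Fin n → Fin n → ℝ)
    (hA12 : ∀ i j k l, A i j k l = - A j i k l)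
    (hBianchi : ∀ i j k l, A i j k l + A j k i l + A k i j l = 0)
    (Ric : Fin n → Fin n → ℝ)
    (hRic : ∀ x y, Ric x y = ∑ i, ∑ j, hinv i j * A i x y j)
    (hWeyl : ∀ x y z w, A x y z w + A x y w z =
      (2 / (n : ℝ)) * (Ric y x - Ric x y) * h z w)
    (LRic : Fin n → Fin n → ℝ)
    (hLRic : ∀ x y, LRic x y = (1/2) * (Ric x y - Ric y x))
    (H : Fin n → Fin n → Fin n → Fin n → ℝ)
    (hH : ∀ x y z w, H x y z w = - (1 / (n : ℝ)) *
      (2 * LRic x y * h z w +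
        (LRic x z * h y w - LRic y z * h x w
          - LRic x w * h y z + LRic y w * h x z)))
    (Aalg : Fin n → Fin n → Fin n → Fin n → ℝ)
    (hAalg : ∀ x y z w, Aalg x y z w = A x y z w - H x y z w) :
    (∀ x y z w, Aalg x y z w = - Aalg y x z w) ∧
    (∀ x y z w, Aalg x y z w = - Aalg x y w z) ∧
    (∀ x y z w, Aalg x y z w + Aalg y z x w + Aalg z x y w = 0) :=
  weyl_minus_higa_is_algebraic_general h hsymm A hA12 hBianchi Ric hWeyl LRic hLRic H hH Aalg hAalg
end
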